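/- arXiv:2401.11096 — 2 statements merged into one kernel-verified Lean document; each statement's English description precedes it below -/
import Mathlib

section
/- Let W be a standard Brownian motion on a probability space, let γ < 1/2 with γ ≠ 0, and let t₁, t₂ > 0. Then Cov( B̃(t₁), B̃(t₂) ) = (t₁ t₂)^{−1} [ (min(t₁,t₂))^{1−2γ} / (γ(1 − γ)(1 − 2γ)) − (min(t₁,t₂))^{1−γ} (max(t₁,t₂))^{−γ} / (γ(1 − γ)) ], where B̃(t) := (1/t) ∫₀ᵗ s^{−γ−1} W(s) ds. -/
open MeasureTheory Set Filter ProbabilityTheory Real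

lemma integrable_pow_gaussianReal (v : NNReal) (n : ℕ) :
    Integrable (fun x : ℝ => x ^ n) (gaussianReal 0 v) := by
  rcases eq_or_ne v 0 with rfl | hv
  · rw [gaussianReal_zero_var]
    refine (integrable_const ((0:ℝ) ^ n)).congr ?_
    rw [Filter.EventuallyEq, ae_dirac_eq]
    exact eventually_pure.2 rfl
  · rw [gaussianReal_of_var_ne_zero _ hv]
    rw [integrable_withDensity_iff (measurable_gaussianPDF _ _)
      (ae_of_all _ fun x => ENNReal.ofReal_lt_top)]
    have hv' : (0:ℝ) < (v:ℝ) := by positivity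
    have hb : (0:ℝ) < (2 * (v:ℝ))⁻¹ := by positivity
    have h := integrable_rpow_mul_exp_neg_mul_sq (b := (2*(v:ℝ))⁻¹) hb (s := (n:ℝ)) (by
      have : (0:ℝ) ≤ n := Nat.cast_nonneg n
      linarith)
    refine (h.const_mul ((Real.sqrt (2 * Real.pi * v))⁻¹)).congr ?_
    refine ae_of_all _ fun x => ?_
    simp only [gaussianPDF, gaussianPDFReal, Real.rpow_natCast]
    rw [ENNReal.toReal_ofReal (by positivity)]
    have : -(2 * (v:ℝ))⁻¹ * x ^ 2 = -(x - 0)^2 / (2*(v:ℝ)) := by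
      field_simp
      ring
    rw [this]
    ring

lemma integral_id_gaussianReal0 (v : NNReal) : ∫ x, x ∂(gaussianReal 0 v) = 0 := by
  have hmap : (gaussianReal 0 v).map ((-1 : ℝ) * ·) = gaussianReal 0 v := by
    rw [gaussianReal_map_const_mul (-1 : ℝ)]
    norm_num
  have h1 : ∫ x, x ∂(gaussianReal 0 v) = ∫ x, x ∂((gaussianReal 0 v).map ((-1:ℝ) * ·)) := by
    rw [hmap]
  rw [integral_map (f := fun x : ℝ => x) (by fun_prop) measurable_id.aestronglyMeasurable] at h1
  simp only [neg_one_mul] at h1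
  have h2 : ∫ (x:ℝ), -x ∂gaussianReal 0 v = - ∫ (x:ℝ), x ∂gaussianReal 0 v :=
    integral_neg _
  linarith

lemma gauss_moments {Ω : Type*} [MeasurableSpace Ω] (P : Measure Ω) (X : Ω → ℝ)
    (hX : Measurable X) (v : NNReal) (hmap : Measure.map X P = gaussianReal 0 v) :
    Integrable X P ∧ Integrable (fun ω => X ω ^ 2) P ∧ ∫ ω, X ω ∂P = 0 := by
  have hXm : AEMeasurable X P := hX.aemeasurable
  have h1 : Integrable X P := by
    have := (integrable_map_measure (f := X) (g := fun x : ℝ => x)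
      measurable_id.aestronglyMeasurable hXm).mp
    rw [hmap] at this
    simpa [Function.comp_def] using this (by simpa using integrable_pow_gaussianReal v 1)
  have h2 : Integrable (fun ω => X ω ^ 2) P := by
    have := (integrable_map_measure (f := X) (g := fun x : ℝ => x ^ 2)
      (by fun_prop) hXm).mp
    rw [hmap] at this
    simpa [Function.comp_def] using this (integrable_pow_gaussianReal v 2)
  refine ⟨h1, h2, ?_⟩
  have := integral_map (f := fun x : ℝ => x) hXm measurable_id.aestronglyMeasurable
  rw [hmap, integral_id_gaussianReal0] at this
  exact this.symm

lemma abs_mul_le' (a b c : ℝ) (hc : 0 < c) : |a * b| ≤ (c * a^2 + c⁻¹ * b^2) / 2 := by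
  have h1 : (0:ℝ) < c⁻¹ := inv_pos.2 hc
  have h2 : c * c⁻¹ = 1 := mul_inv_cancel₀ (ne_of_gt hc)
  rcases abs_cases (a * b) with ⟨h3, _⟩ | ⟨h3, _⟩ <;> rw [h3] <;>
    nlinarith [sq_nonneg (c * a - b), sq_nonneg (c * a + b), mul_pos hc h1]

lemma integrable_and_integral_abs_mul_le {Ω : Type*} [MeasurableSpace Ω] {P : Measure Ω}
    {X Y : Ω → ℝ} (hX2 : Integrable (fun ω => X ω ^ 2) P)
    (hY2 : Integrable (fun ω => Y ω ^ 2) P)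
    (hm : AEStronglyMeasurable (fun ω => X ω * Y ω) P) (c : ℝ) (hc : 0 < c) :
    Integrable (fun ω => X ω * Y ω) P ∧
      ∫ ω, |X ω * Y ω| ∂P ≤ (c * ∫ ω, X ω ^ 2 ∂P + c⁻¹ * ∫ ω, Y ω ^ 2 ∂P) / 2 := by
  have hbi : Integrable (fun ω => (c * X ω ^ 2 + c⁻¹ * Y ω ^ 2) / 2) P :=
    (((hX2.const_mul c).add (hY2.const_mul c⁻¹)).div_const 2)
  have hint : Integrable (fun ω => X ω * Y ω) P := by
    refine hbi.mono' hm (ae_of_all _ fun ω => ?_)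
    exact abs_mul_le' (X ω) (Y ω) c hc
  refine ⟨hint, ?_⟩
  calc ∫ ω, |X ω * Y ω| ∂P ≤ ∫ ω, (c * X ω ^ 2 + c⁻¹ * Y ω ^ 2) / 2 ∂P := by
        refine integral_mono hint.abs hbi fun ω => abs_mul_le' (X ω) (Y ω) c hc
    _ = (c * ∫ ω, X ω ^ 2 ∂P + c⁻¹ * ∫ ω, Y ω ^ 2 ∂P) / 2 := by
        rw [integral_div, integral_add (hX2.const_mul c) (hY2.const_mul c⁻¹),
          integral_const_mul, integral_const_mul]

lemma integrableOn_Ioc_rpow {r : ℝ} (hr : -1 < r) (a b : ℝ) (ha : 0 ≤ a) :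
    IntegrableOn (fun x : ℝ => x ^ r) (Ioc a b) := by
  rcases le_or_gt a b with hab | hab
  · exact (intervalIntegrable_iff_integrableOn_Ioc_of_le hab).mp
      (intervalIntegral.intervalIntegrable_rpow' hr)
  · simp [Ioc_eq_empty (not_lt.2 hab.le)]

lemma integral_Ioc_rpow {r : ℝ} (hr : -1 < r) {b : ℝ} (hb : 0 ≤ b) :
    ∫ x in Ioc (0:ℝ) b, x ^ r = b ^ (r+1) / (r+1) := by
  rw [← intervalIntegral.integral_of_le hb, integral_rpow (Or.inl hr),
    Real.zero_rpow (by linarith), sub_zero]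

lemma integral_Ioc_rpow' {r : ℝ} (hr : r ≠ -1) {a b : ℝ} (ha : 0 < a) (hab : a ≤ b) :
    ∫ x in Ioc a b, x ^ r = (b ^ (r+1) - a ^ (r+1)) / (r+1) := by
  rw [← intervalIntegral.integral_of_le hab, integral_rpow]
  right
  refine ⟨hr, fun h => ?_⟩
  rw [Set.uIcc_of_le hab] at h
  exact absurd h.1 (not_le.2 ha)

lemma rpow_succ_mul {x : ℝ} (hx : 0 < x) (γ : ℝ) : x ^ (-γ-1) * x = x ^ (-γ) := by
  rw [Real.rpow_sub hx, Real.rpow_one]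
  field_simp

lemma double_int {γ : ℝ} (hγ : γ < 1/2) (hγ0 : γ ≠ 0) {a b : ℝ} (ha : 0 < a) (hab : a ≤ b) :
    ∫ s in Ioc (0:ℝ) a, ∫ w in Ioc (0:ℝ) b, s ^ (-γ-1) * w ^ (-γ-1) * min s w
      = a ^ (1-2*γ) / (γ*(1-γ)*(1-2*γ)) - a ^ (1-γ) * b ^ (-γ) / (γ*(1-γ)) := by
  have hγ1 : γ < 1 := by linarith
  have h2γ : -1 < -2*γ := by linarith
  have h1γ : -1 < -γ := by linarith
  have hb : 0 < b := lt_of_lt_of_le ha hab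
  have h_inner : ∀ s ∈ Ioc (0:ℝ) a,
      ∫ w in Ioc (0:ℝ) b, s ^ (-γ-1) * w ^ (-γ-1) * min s w
        = (γ*(1-γ))⁻¹ * s ^ (-2*γ) - (b ^ (-γ) / γ) * s ^ (-γ) := by
    intro s hs
    have hs0 : 0 < s := hs.1
    have hsb : s ≤ b := le_trans hs.2 hab
    have e1 : EqOn (fun w : ℝ => s ^ (-γ-1) * w ^ (-γ-1) * min s w)
        (fun w : ℝ => s ^ (-γ-1) * w ^ (-γ)) (Ioc 0 s) := by
      intro w hw
      simp only
      rw [min_eq_right hw.2, mul_assoc, rpow_succ_mul hw.1]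
    have e2 : EqOn (fun w : ℝ => s ^ (-γ-1) * w ^ (-γ-1) * min s w)
        (fun w : ℝ => s ^ (-γ) * w ^ (-γ-1)) (Ioc s b) := by
      intro w hw
      simp only
      rw [min_eq_left (le_of_lt hw.1),
        show s ^ (-γ-1) * w ^ (-γ-1) * s = (s ^ (-γ-1) * s) * w ^ (-γ-1) by ring,
        rpow_succ_mul hs0]
    have i1 : IntegrableOn (fun w : ℝ => s ^ (-γ-1) * w ^ (-γ)) (Ioc 0 s) :=
      (integrableOn_Ioc_rpow h1γ 0 s le_rfl).const_mul _
    have i2 : IntegrableOn (fun w : ℝ => s ^ (-γ) * w ^ (-γ-1)) (Ioc s b) := by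
      have : IntervalIntegrable (fun w : ℝ => w ^ (-γ-1)) volume s b :=
        intervalIntegral.intervalIntegrable_rpow (Or.inr (by
          rw [Set.uIcc_of_le hsb]
          intro h
          exact absurd h.1 (not_le.2 hs0)))
      exact ((intervalIntegrable_iff_integrableOn_Ioc_of_le hsb).mp this).const_mul _
    rw [← Ioc_union_Ioc_eq_Ioc hs0.le hsb,
      setIntegral_union (Ioc_disjoint_Ioc_of_le le_rfl) measurableSet_Ioc
        (i1.congr_fun (fun w hw => (e1 hw).symm) measurableSet_Ioc)
        (i2.congr_fun (fun w hw => (e2 hw).symm) measurableSet_Ioc),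
      setIntegral_congr_fun measurableSet_Ioc e1,
      setIntegral_congr_fun measurableSet_Ioc e2,
      integral_const_mul, integral_const_mul, integral_Ioc_rpow h1γ hs0.le,
      integral_Ioc_rpow' (by intro h; apply hγ0; linarith) hs0 hsb]
    have key1 : s ^ (-γ-1) * s ^ (-γ+1) = s ^ (-2*γ) := by
      rw [← Real.rpow_add hs0]; ring_nf
    have key2 : s ^ (-γ) * s ^ (-γ) = s ^ (-2*γ) := by
      rw [← Real.rpow_add hs0]; ring_nf
    rw [show (-γ-1+1 : ℝ) = -γ by ring]
    have d1 : (-γ+1 : ℝ) ≠ 0 := by intro h; linarith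
    calc s ^ (-γ-1) * (s ^ (-γ+1) / (-γ+1)) + s ^ (-γ) * ((b ^ (-γ) - s ^ (-γ)) / (-γ))
        = s ^ (-γ-1) * s ^ (-γ+1) / (-γ+1) + (s ^ (-γ) * b ^ (-γ) - s ^ (-γ) * s ^ (-γ)) / (-γ) := by
          ring
      _ = s ^ (-2*γ) / (-γ+1) + (s ^ (-γ) * b ^ (-γ) - s ^ (-2*γ)) / (-γ) := by
          rw [key1, key2]
      _ = (γ*(1-γ))⁻¹ * s ^ (-2*γ) - (b ^ (-γ) / γ) * s ^ (-γ) := by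
          have d2 : γ*(1-γ) ≠ 0 := mul_ne_zero hγ0 (by intro h; linarith)
          have d3 : (1-γ:ℝ) ≠ 0 := by intro h; linarith
          field_simp [d1, hγ0, d2, d3]
          ring
  rw [setIntegral_congr_fun measurableSet_Ioc h_inner,
    integral_sub (((integrableOn_Ioc_rpow h2γ 0 a le_rfl)).const_mul _)
      (((integrableOn_Ioc_rpow h1γ 0 a le_rfl)).const_mul _),
    integral_const_mul, integral_const_mul, integral_Ioc_rpow h2γ ha.le,
    integral_Ioc_rpow h1γ ha.le,
    show (-2*γ+1:ℝ) = 1-2*γ by ring, show (-γ+1:ℝ) = 1-γ by ring]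
  have d1 : (1-γ:ℝ) ≠ 0 := by intro h; linarith
  have d2 : (1-2*γ:ℝ) ≠ 0 := by intro h; linarith
  field_simp

/-- A standard Brownian motion on `[0,∞)`: a measurable, a.s. continuous, Gaussian
process starting at `0` whose covariance function is `Cov(W(s), W(w)) = min s w`
(every finite linear combination of its values is centered Gaussian). -/
def IsStandardBrownianMotion {Ω : Type*} [MeasurableSpace Ω] (P : Measure Ω)
    (W : ℝ → Ω → ℝ) : Prop :=
  IsProbabilityMeasure P ∧
  (∀ t, Measurable (W t)) ∧
  (∀ᵐ ω ∂P, ContinuousOn (fun t => W t ω) (Ici 0)) ∧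
  (∀ᵐ ω ∂P, W 0 ω = 0) ∧
  (∀ (n : ℕ) (c : Fin n → ℝ) (ts : Fin n → ℝ), (∀ i, 0 ≤ ts i) →
    ∃ v : NNReal, Measure.map (fun ω => ∑ i, c i * W (ts i) ω) P = gaussianReal 0 v) ∧
  (∀ s ∈ Ici (0 : ℝ), ∀ w ∈ Ici (0 : ℝ), ∫ ω, W s ω * W w ω ∂P = min s w)

/-- covariance of the limiting CVaR process
`B̃(t) = (1/t)∫₀ᵗ s^(−γ−1) W(s) ds` for `γ < 1/2`, `γ ≠ 0`:
`Cov(B̃(t₁), B̃(t₂)) = (t₁t₂)^(−1)[(min t₁ t₂)^(1−2γ)/(γ(1−γ)(1−2γ))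
  − (min t₁ t₂)^(1−γ)(max t₁ t₂)^(−γ)/(γ(1−γ))]`. -/
theorem limiting_cvar_process_covariance {Ω : Type*} [MeasurableSpace Ω]
    (P : Measure Ω) (W : ℝ → Ω → ℝ) (hW : IsStandardBrownianMotion P W)
    (γ : ℝ) (hγ : γ < 1 / 2) (hγ0 : γ ≠ 0)
    (t₁ t₂ : ℝ) (ht₁ : 0 < t₁) (ht₂ : 0 < t₂)
    (B : ℝ → Ω → ℝ)
    (hB : ∀ t ω, B t ω = (1 / t) * ∫ s in Ioc (0 : ℝ) t, s ^ (-γ - 1) * W s ω) :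
    (∫ ω, B t₁ ω * B t₂ ω ∂P) - (∫ ω, B t₁ ω ∂P) * ∫ ω, B t₂ ω ∂P
      = (t₁ * t₂)⁻¹ *
          ((min t₁ t₂) ^ (1 - 2 * γ) / (γ * (1 - γ) * (1 - 2 * γ))
            - (min t₁ t₂) ^ (1 - γ) * (max t₁ t₂) ^ (-γ) / (γ * (1 - γ))) := by
  obtain ⟨hProb, hMeas, hCont, hZero, hGauss, hCov⟩ := hW
  -- a measurable full-measure set on which the paths are continuous
  obtain ⟨N, hsubN, hNmeas, hNnull⟩ :
      ∃ N ⊇ {ω | ¬ ContinuousOn (fun t => W t ω) (Ici 0)}, MeasurableSet N ∧ P N = 0 :=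
    exists_measurable_superset_of_null (ae_iff.mp hCont)
  set G : Set Ω := Nᶜ with hGdef
  have hGmeas : MeasurableSet G := hNmeas.compl
  have hGae : ∀ᵐ ω ∂P, ω ∈ G := compl_mem_ae_iff.mpr hNnull
  have hGcont : ∀ ω ∈ G, ContinuousOn (fun t => W t ω) (Ici 0) := by
    intro ω hω
    by_contra h
    exact hω (hsubN h)
  -- the regularised version of W
  set V : ℝ → Ω → ℝ := fun t ω => Set.indicator G (fun ω' => W (max t 0) ω') ω with hVdef
  have hVmeas : ∀ t, Measurable (V t) := fun t => (hMeas _).indicator hGmeas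
  have hVeq : ∀ t ≥ (0:ℝ), ∀ ω ∈ G, V t ω = W t ω := by
    intro t ht ω hω
    simp only [hVdef, Set.indicator_of_mem hω, max_eq_left ht]
  have hVae : ∀ t ≥ (0:ℝ), V t =ᵐ[P] W t := by
    intro t ht
    filter_upwards [hGae] with ω hω using hVeq t ht ω hω
  have hVcont : ∀ ω, Continuous fun t => V t ω := by
    intro ω
    by_cases hω : ω ∈ G
    · have : (fun t => V t ω) = fun t => W (max t 0) ω := by
        funext t; simp [hVdef, Set.indicator_of_mem hω]
      rw [this]
      exact (hGcont ω hω).comp_continuous (continuous_id.max continuous_const)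
        (fun t => mem_Ici.2 (le_max_right t 0))
    · have : (fun t => V t ω) = fun _ => 0 := by
        funext t; simp [hVdef, Set.indicator_of_notMem hω]
      rw [this]; exact continuous_const
  have hVuncurry : Measurable (Function.uncurry V) :=
    measurable_uncurry_of_continuous_of_measurable hVcont hVmeas
  -- Gaussian marginals of W
  have hmap : ∀ s ≥ (0:ℝ), ∃ v : NNReal, Measure.map (W s) P = gaussianReal 0 v := by
    intro s hs
    obtain ⟨v, hv⟩ := hGauss 1 (fun _ => 1) (fun _ => s) (fun _ => hs)
    refine ⟨v, ?_⟩
    have h1 : (fun ω => ∑ i : Fin 1, (fun _ => (1:ℝ)) i * W ((fun _ => s) i) ω) = W s := by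
      funext ω; simp
    rwa [h1] at hv
  have hWmom : ∀ s ≥ (0:ℝ), Integrable (W s) P ∧ Integrable (fun ω => W s ω ^ 2) P ∧
      ∫ ω, W s ω ∂P = 0 := by
    intro s hs
    obtain ⟨v, hv⟩ := hmap s hs
    exact gauss_moments P (W s) (hMeas s) v hv
  have hVint : ∀ s ≥ (0:ℝ), Integrable (V s) P :=
    fun s hs => ((hWmom s hs).1).congr (hVae s hs).symm
  have hVsq : ∀ s ≥ (0:ℝ), Integrable (fun ω => V s ω ^ 2) P := by
    intro s hs
    refine ((hWmom s hs).2.1).congr ?_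
    filter_upwards [hVae s hs] with ω hω using by rw [hω]
  have hVmean : ∀ s ≥ (0:ℝ), ∫ ω, V s ω ∂P = 0 := by
    intro s hs
    rw [integral_congr_ae (hVae s hs)]
    exact (hWmom s hs).2.2
  have hVcov : ∀ s ≥ (0:ℝ), ∀ w ≥ (0:ℝ), ∫ ω, V s ω * V w ω ∂P = min s w := by
    intro s hs w hw
    have h : (fun ω => V s ω * V w ω) =ᵐ[P] fun ω => W s ω * W w ω := by
      filter_upwards [hVae s hs, hVae w hw] with ω h1 h2 using by rw [h1, h2]
    rw [integral_congr_ae h]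
    exact hCov s hs w hw
  have hVsqval : ∀ s ≥ (0:ℝ), ∫ ω, V s ω ^ 2 ∂P = s := by
    intro s hs
    have := hVcov s hs s hs
    rw [min_self] at this
    rw [show (fun ω => V s ω ^ 2) = fun ω => V s ω * V s ω by funext ω; ring]
    exact this
  have hVmulmeas : ∀ s w : ℝ, AEStronglyMeasurable (fun ω => V s ω * V w ω) P :=
    fun s w => ((hVmeas s).mul (hVmeas w)).aestronglyMeasurable
  have hVmulint : ∀ s ≥ (0:ℝ), ∀ w ≥ (0:ℝ), Integrable (fun ω => V s ω * V w ω) P :=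
    fun s hs w hw => (integrable_and_integral_abs_mul_le (hVsq s hs) (hVsq w hw)
      (hVmulmeas s w) 1 one_pos).1
  have habs2 : ∀ s > (0:ℝ), ∀ w > (0:ℝ),
      ∫ ω, |V s ω * V w ω| ∂P ≤ Real.sqrt s * Real.sqrt w := by
    intro s hs w hw
    have hc : 0 < Real.sqrt w / Real.sqrt s := div_pos (Real.sqrt_pos.2 hw) (Real.sqrt_pos.2 hs)
    have h := (integrable_and_integral_abs_mul_le (hVsq s hs.le) (hVsq w hw.le)
      (hVmulmeas s w) _ hc).2
    rw [hVsqval s hs.le, hVsqval w hw.le] at h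
    have e : (Real.sqrt w / Real.sqrt s * s + (Real.sqrt w / Real.sqrt s)⁻¹ * w) / 2
        = Real.sqrt s * Real.sqrt w := by
      rw [inv_div, div_mul_eq_mul_div, div_mul_eq_mul_div, mul_div_assoc, mul_div_assoc,
        Real.div_sqrt, Real.div_sqrt]
      ring
    linarith
  have habs1 : ∀ s > (0:ℝ), ∫ ω, |V s ω| ∂P ≤ Real.sqrt s := by
    intro s hs
    have hsq1 : Integrable (fun ω => (fun _ : Ω => (1:ℝ)) ω ^ 2) P := by
      simpa using integrable_const (1:ℝ)
    have hc : 0 < (Real.sqrt s)⁻¹ := inv_pos.2 (Real.sqrt_pos.2 hs)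
    have h := (integrable_and_integral_abs_mul_le (X := V s) (Y := fun _ => (1:ℝ))
      (hVsq s hs.le) hsq1 (by simpa [mul_one] using (hVmeas s).aestronglyMeasurable) _ hc).2
    simp only [mul_one, one_pow, inv_inv] at h
    rw [hVsqval s hs.le, integral_const, measureReal_def, measure_univ] at h
    have e : ((Real.sqrt s)⁻¹ * s + Real.sqrt s * ((1:ENNReal).toReal • (1:ℝ))) / 2
        = Real.sqrt s := by
      rw [inv_mul_eq_div, Real.div_sqrt]
      simp
    linarith [h, e.le]
  -- the scalar bound function
  have hexp : (-1:ℝ) < -γ - 1 + 1/2 := by linarith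
  have hgeq : ∀ t > (0:ℝ), EqOn (fun s : ℝ => s ^ (-γ-1+1/2))
      (fun s : ℝ => s ^ (-γ-1) * Real.sqrt s) (Ioc 0 t) := by
    intro t ht s hs
    simp only
    rw [Real.rpow_add hs.1, Real.sqrt_eq_rpow]
  have hgint : ∀ t > (0:ℝ), IntegrableOn (fun s : ℝ => s ^ (-γ-1) * Real.sqrt s) (Ioc 0 t) :=
    fun t ht => (integrableOn_Ioc_rpow hexp 0 t le_rfl).congr_fun (hgeq t ht) measurableSet_Ioc
  -- Fubini integrability for the mean
  have hmeasF : ∀ t : ℝ, AEStronglyMeasurable (Function.uncurry fun s ω => s ^ (-γ-1) * V s ω)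
      ((volume.restrict (Ioc 0 t)).prod P) := by
    intro t
    apply Measurable.aestronglyMeasurable
    exact ((measurable_fst.pow_const _).comp measurable_id |>.mono le_rfl le_rfl : Measurable fun p : ℝ × Ω => p.1 ^ (-γ-1)).mul
      (hVuncurry.comp (measurable_fst.prodMk measurable_snd))
  have hF1 : ∀ t > (0:ℝ), Integrable (Function.uncurry fun s ω => s ^ (-γ-1) * V s ω)
      ((volume.restrict (Ioc 0 t)).prod P) := by
    intro t ht
    rw [integrable_prod_iff (hmeasF t)]
    constructor
    · filter_upwards [ae_restrict_mem measurableSet_Ioc] with s hs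
      simpa [Function.uncurry] using ((hVint s hs.1.le)).const_mul (s ^ (-γ-1))
    · refine (hgint t ht).mono' ((hmeasF t).norm.integral_prod_right') ?_
      filter_upwards [ae_restrict_mem measurableSet_Ioc] with s hs
      simp only [Function.uncurry_apply_pair]
      have h0 : 0 < s := hs.1
      have hr : (0:ℝ) < s ^ (-γ-1) := Real.rpow_pos_of_pos h0 _
      have e1 : ∫ ω, ‖s ^ (-γ-1) * V s ω‖ ∂P = s ^ (-γ-1) * ∫ ω, |V s ω| ∂P := by
        simp only [Real.norm_eq_abs, abs_mul, abs_of_pos hr]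
        exact integral_const_mul _ _
      rw [Real.norm_eq_abs, abs_of_nonneg (integral_nonneg fun ω => norm_nonneg _), e1]
      exact mul_le_mul_of_nonneg_left (habs1 s h0) hr.le
  -- the mean of B is zero
  have hBmean : ∀ t > (0:ℝ), ∫ ω, B t ω ∂P = 0 := by
    intro t ht
    have hcong : ∫ ω, B t ω ∂P
        = ∫ ω, ((1/t) * ∫ s in Ioc (0:ℝ) t, s ^ (-γ-1) * V s ω) ∂P := by
      refine integral_congr_ae ?_
      filter_upwards [hGae] with ω hω
      rw [hB t ω]
      congr 1
      refine setIntegral_congr_fun measurableSet_Ioc fun s hs => ?_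
      rw [hVeq s hs.1.le ω hω]
    rw [hcong, integral_const_mul, ← integral_integral_swap (hF1 t ht)]
    have hz : ∀ s ∈ Ioc (0:ℝ) t, ∫ ω, s ^ (-γ-1) * V s ω ∂P = 0 := fun s hs => by
      rw [integral_const_mul, hVmean s hs.1.le, mul_zero]
    rw [setIntegral_congr_fun measurableSet_Ioc hz]
    simp
  -- Fubini setup for the second moment
  set μ₁ := volume.restrict (Ioc (0:ℝ) t₁) with hμ₁
  set μ₂ := volume.restrict (Ioc (0:ℝ) t₂) with hμ₂
  set K : ℝ × ℝ → Ω → ℝ :=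
    fun p ω => (p.1 ^ (-γ-1) * V p.1 ω) * (p.2 ^ (-γ-1) * V p.2 ω) with hKdef
  have hKrw : ∀ p : ℝ × ℝ,
      K p = fun ω => (p.1 ^ (-γ-1) * p.2 ^ (-γ-1)) * (V p.1 ω * V p.2 ω) := by
    intro p; funext ω; simp only [hKdef]; ring
  have hKmeas : Measurable (Function.uncurry K) := by
    have h1 : Measurable fun q : (ℝ × ℝ) × Ω => V q.1.1 q.2 :=
      hVuncurry.comp (measurable_fst.fst.prodMk measurable_snd)
    have h2 : Measurable fun q : (ℝ × ℝ) × Ω => V q.1.2 q.2 :=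
      hVuncurry.comp (measurable_fst.snd.prodMk measurable_snd)
    have h3 : Measurable fun q : (ℝ × ℝ) × Ω => q.1.1 ^ (-γ-1) := by fun_prop
    have h4 : Measurable fun q : (ℝ × ℝ) × Ω => q.1.2 ^ (-γ-1) := by fun_prop
    exact ((h3.mul h1).mul (h4.mul h2))
  have haeP : ∀ᵐ p ∂(μ₁.prod μ₂), p.1 ∈ Ioc (0:ℝ) t₁ ∧ p.2 ∈ Ioc (0:ℝ) t₂ := by
    rw [hμ₁, hμ₂, Measure.prod_restrict]
    filter_upwards [ae_restrict_mem (measurableSet_Ioc.prod measurableSet_Ioc)] with p hp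
    exact hp
  have hK : Integrable (Function.uncurry K) ((μ₁.prod μ₂).prod P) := by
    rw [integrable_prod_iff hKmeas.aestronglyMeasurable]
    constructor
    · filter_upwards [haeP] with p hp
      have := (hVmulint p.1 hp.1.1.le p.2 hp.2.1.le).const_mul
        (p.1 ^ (-γ-1) * p.2 ^ (-γ-1))
      simpa [Function.uncurry, hKrw p] using this
    · have hbint : Integrable
          (fun p : ℝ × ℝ => (p.1 ^ (-γ-1) * Real.sqrt p.1) * (p.2 ^ (-γ-1) * Real.sqrt p.2))
          (μ₁.prod μ₂) := (hgint t₁ ht₁).mul_prod (hgint t₂ ht₂)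
      refine hbint.mono' (hKmeas.aestronglyMeasurable.norm.integral_prod_right') ?_
      filter_upwards [haeP] with p hp
      have h01 : 0 < p.1 := hp.1.1
      have h02 : 0 < p.2 := hp.2.1
      have hr1 : (0:ℝ) < p.1 ^ (-γ-1) := Real.rpow_pos_of_pos h01 _
      have hr2 : (0:ℝ) < p.2 ^ (-γ-1) := Real.rpow_pos_of_pos h02 _
      have e1 : ∫ ω, ‖Function.uncurry K (p, ω)‖ ∂P
          = (p.1 ^ (-γ-1) * p.2 ^ (-γ-1)) * ∫ ω, |V p.1 ω * V p.2 ω| ∂P := by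
        rw [← integral_const_mul]
        congr 1
        funext ω
        simp only [Function.uncurry_apply_pair, hKrw p, Real.norm_eq_abs, abs_mul,
          abs_of_pos hr1, abs_of_pos hr2]
      rw [Real.norm_eq_abs, abs_of_nonneg (integral_nonneg fun ω => norm_nonneg _), e1]
      calc (p.1 ^ (-γ-1) * p.2 ^ (-γ-1)) * ∫ ω, |V p.1 ω * V p.2 ω| ∂P
          ≤ (p.1 ^ (-γ-1) * p.2 ^ (-γ-1)) * (Real.sqrt p.1 * Real.sqrt p.2) :=
            mul_le_mul_of_nonneg_left (habs2 p.1 h01 p.2 h02) (by positivity)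
        _ = (p.1 ^ (-γ-1) * Real.sqrt p.1) * (p.2 ^ (-γ-1) * Real.sqrt p.2) := by ring
  -- rewrite the second moment as a double integral
  have hBBcong : ∫ ω, B t₁ ω * B t₂ ω ∂P
      = ∫ ω, ((t₁ * t₂)⁻¹ * ∫ p, K p ω ∂(μ₁.prod μ₂)) ∂P := by
    refine integral_congr_ae ?_
    filter_upwards [hGae] with ω hω
    rw [hB t₁ ω, hB t₂ ω]
    have h1 : ∫ s in Ioc (0:ℝ) t₁, s ^ (-γ-1) * W s ω = ∫ s in Ioc (0:ℝ) t₁, s ^ (-γ-1) * V s ω :=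
      setIntegral_congr_fun measurableSet_Ioc fun s hs => by rw [hVeq s hs.1.le ω hω]
    have h2 : ∫ s in Ioc (0:ℝ) t₂, s ^ (-γ-1) * W s ω = ∫ s in Ioc (0:ℝ) t₂, s ^ (-γ-1) * V s ω :=
      setIntegral_congr_fun measurableSet_Ioc fun s hs => by rw [hVeq s hs.1.le ω hω]
    rw [h1, h2, mul_mul_mul_comm, ← integral_prod_mul (μ := μ₁) (ν := μ₂)
      (f := fun s => s ^ (-γ-1) * V s ω) (g := fun w => w ^ (-γ-1) * V w ω)]
    congr 1
    rw [div_mul_div_comm, one_mul, ← one_div, one_div]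
  rw [hBBcong, integral_const_mul, ← integral_integral_swap hK]
  have hinner : ∀ᵐ p ∂(μ₁.prod μ₂),
      (fun p => ∫ ω, K p ω ∂P) p
        = (fun p : ℝ × ℝ => (p.1 ^ (-γ-1) * p.2 ^ (-γ-1)) * min p.1 p.2) p := by
    filter_upwards [haeP] with p hp
    simp only [hKrw p]
    rw [integral_const_mul, hVcov p.1 hp.1.1.le p.2 hp.2.1.le]
  rw [integral_congr_ae hinner, hBmean t₁ ht₁, hBmean t₂ ht₂, mul_zero, sub_zero]
  -- integrability of the deterministic integrand
  have hdet : ∀ a b : ℝ, 0 < a → 0 < b → Integrable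
      (fun p : ℝ × ℝ => (p.1 ^ (-γ-1) * p.2 ^ (-γ-1)) * min p.1 p.2)
      ((volume.restrict (Ioc (0:ℝ) a)).prod (volume.restrict (Ioc (0:ℝ) b))) := by
    intro a b ha hb
    have hbint : Integrable
        (fun p : ℝ × ℝ => (p.1 ^ (-γ-1) * Real.sqrt p.1) * (p.2 ^ (-γ-1) * Real.sqrt p.2))
        ((volume.restrict (Ioc (0:ℝ) a)).prod (volume.restrict (Ioc (0:ℝ) b))) :=
      (hgint a ha).mul_prod (hgint b hb)
    refine hbint.mono' (Measurable.aestronglyMeasurable (by fun_prop)) ?_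
    rw [Measure.prod_restrict]
    filter_upwards [ae_restrict_mem (measurableSet_Ioc.prod measurableSet_Ioc)] with p hp
    have h01 : 0 < p.1 := hp.1.1
    have h02 : 0 < p.2 := hp.2.1
    have hr1 : (0:ℝ) < p.1 ^ (-γ-1) := Real.rpow_pos_of_pos h01 _
    have hr2 : (0:ℝ) < p.2 ^ (-γ-1) := Real.rpow_pos_of_pos h02 _
    have hminle : min p.1 p.2 ≤ Real.sqrt p.1 * Real.sqrt p.2 := by
      rcases le_total p.1 p.2 with h | h
      · rw [min_eq_left h]
        nth_rewrite 1 [← Real.mul_self_sqrt h01.le]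
        exact mul_le_mul_of_nonneg_left (Real.sqrt_le_sqrt h) (Real.sqrt_nonneg _)
      · rw [min_eq_right h]
        nth_rewrite 1 [← Real.mul_self_sqrt h02.le]
        exact mul_le_mul_of_nonneg_right (Real.sqrt_le_sqrt h) (Real.sqrt_nonneg _)
    rw [Real.norm_eq_abs, abs_mul, abs_of_pos (mul_pos hr1 hr2),
      abs_of_pos (lt_min h01 h02)]
    calc (p.1 ^ (-γ-1) * p.2 ^ (-γ-1)) * min p.1 p.2
        ≤ (p.1 ^ (-γ-1) * p.2 ^ (-γ-1)) * (Real.sqrt p.1 * Real.sqrt p.2) :=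
          mul_le_mul_of_nonneg_left hminle (by positivity)
      _ = (p.1 ^ (-γ-1) * Real.sqrt p.1) * (p.2 ^ (-γ-1) * Real.sqrt p.2) := by ring
  rcases le_total t₁ t₂ with h | h
  · rw [integral_prod _ (hdet t₁ t₂ ht₁ ht₂), double_int hγ hγ0 ht₁ h,
      min_eq_left h, max_eq_right h]
  · have hswap : ∫ p, (p.1 ^ (-γ-1) * p.2 ^ (-γ-1)) * min p.1 p.2 ∂(μ₁.prod μ₂)
        = ∫ p, (p.1 ^ (-γ-1) * p.2 ^ (-γ-1)) * min p.1 p.2 ∂(μ₂.prod μ₁) := by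
      rw [← integral_prod_swap
        (fun p : ℝ × ℝ => (p.1 ^ (-γ-1) * p.2 ^ (-γ-1)) * min p.1 p.2)]
      congr 1
      funext z
      simp only [Prod.fst_swap, Prod.snd_swap]
      rw [min_comm]
      ring
    rw [hswap, integral_prod _ (hdet t₂ t₁ ht₂ ht₁), double_int hγ hγ0 ht₂ h,
      min_eq_right h, max_eq_left h]
end

section
/- Let W be a standard Brownian motion on a probability space and let t₁, t₂ > 0. Then Cov( B̃(t₁), B̃(t₂) ) = (max(t₁,t₂))^{−1} ( 2 − log(min(t₁,t₂)) + log(max(t₁,t₂)) ), where B̃(t) := (1/t) ∫₀ᵗ s^{−1} W(s) ds; in particular Var(B̃(t)) = 2/t. -/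
open MeasureTheory Set Filter ProbabilityTheory

section calculus

lemma integrableOn_sqrt_inv {t : ℝ} (ht : 0 < t) :
    IntegrableOn (fun s : ℝ => (Real.sqrt s)⁻¹) (Ioc 0 t) := by
  have h : IntervalIntegrable (fun x : ℝ => x ^ (-(1/2) : ℝ)) volume 0 t :=
    intervalIntegral.intervalIntegrable_rpow' (by norm_num)
  have h2 : IntegrableOn (fun x : ℝ => x ^ (-(1/2) : ℝ)) (Ioc 0 t) :=
    (intervalIntegrable_iff_integrableOn_Ioc_of_le ht.le).1 h
  refine h2.congr_fun (fun x hx => ?_) measurableSet_Ioc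
  beta_reduce
  rw [Real.rpow_neg hx.1.le, Real.sqrt_eq_rpow]

lemma integrableOn_log_Ioc {t : ℝ} (ht : 0 < t) :
    IntegrableOn Real.log (Ioc 0 t) := by
  refine Integrable.mono' (g := fun x : ℝ => 2 * ((Real.sqrt x)⁻¹ + Real.sqrt x))
    (((integrableOn_sqrt_inv ht).add
      (Real.continuous_sqrt.integrableOn_Ioc)).const_mul 2)
    Real.measurable_log.aestronglyMeasurable ?_
  filter_upwards [ae_restrict_mem measurableSet_Ioc] with x hx
  have hx0 : (0:ℝ) < x := hx.1
  have hs : 0 < Real.sqrt x := Real.sqrt_pos.2 hx0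
  have h1 : Real.log x = 2 * Real.log (Real.sqrt x) := by
    rw [Real.log_sqrt hx0.le]; ring
  have h2 : Real.log (Real.sqrt x) ≤ Real.sqrt x := by
    have := Real.log_le_sub_one_of_pos hs; linarith
  have h3 : -Real.log (Real.sqrt x) ≤ (Real.sqrt x)⁻¹ := by
    have := Real.log_le_sub_one_of_pos (inv_pos.2 hs)
    rw [Real.log_inv] at this
    linarith [inv_pos.2 hs]
  have h4 : |Real.log (Real.sqrt x)| ≤ (Real.sqrt x)⁻¹ + Real.sqrt x := by
    rcases abs_cases (Real.log (Real.sqrt x)) with ⟨he, _⟩ | ⟨he, _⟩ <;> rw [he]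
    · have := inv_pos.2 hs; linarith
    · linarith [hs.le]
  rw [Real.norm_eq_abs, h1, abs_mul, abs_two]
  linarith [h4]

lemma integral_log_Ioc {t : ℝ} (ht : 0 < t) :
    ∫ s in Ioc (0:ℝ) t, Real.log s = t * Real.log t - t := by
  have hcont : ContinuousOn (fun s : ℝ => s * Real.log s - s) (Icc 0 t) :=
    (Real.continuous_mul_log.sub continuous_id).continuousOn
  have hderiv : ∀ x ∈ Ioo (0:ℝ) t,
      HasDerivWithinAt (fun s : ℝ => s * Real.log s - s) (Real.log x) (Ioi x) x := by
    intro x hx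
    have h := (Real.hasDerivAt_mul_log hx.1.ne').sub (hasDerivAt_id x)
    have h2 : Real.log x + 1 - 1 = Real.log x := by ring
    rw [h2] at h
    exact h.hasDerivWithinAt
  have hint : IntervalIntegrable Real.log volume 0 t :=
    (intervalIntegrable_iff_integrableOn_Ioc_of_le ht.le).2 (integrableOn_log_Ioc ht)
  have h := intervalIntegral.integral_eq_sub_of_hasDeriv_right_of_le ht.le hcont hderiv hint
  rw [intervalIntegral.integral_of_le ht.le] at h
  rw [h]
  simp

end calculus

section prob

variable {Ω : Type*} [MeasurableSpace Ω] {P : Measure Ω}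

lemma aux_gaussian_mean_zero {f : Ω → ℝ} (hf : Measurable f) {v : NNReal}
    (h : Measure.map f P = gaussianReal 0 v) : ∫ ω, f ω ∂P = 0 := by
  have h1 : ∫ ω, f ω ∂P = ∫ x, x ∂(gaussianReal 0 v) := by
    rw [← h]
    exact (integral_map hf.aemeasurable aestronglyMeasurable_id).symm
  have h2 : Measure.map (fun x : ℝ => -x) (gaussianReal 0 v) = gaussianReal 0 v := by
    have h3 := gaussianReal_map_const_mul (μ := 0) (v := v) (-1)
    rw [mul_zero] at h3
    convert h3 using 2
    · funext x; ring
    · ext; simp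
  have h3 : ∫ x, x ∂(gaussianReal 0 v) = - ∫ x, x ∂(gaussianReal 0 v) := by
    have h5 : ∫ y, y ∂(Measure.map (fun x : ℝ => -x) (gaussianReal 0 v))
        = ∫ x : ℝ, -x ∂(gaussianReal 0 v) :=
      integral_map measurable_neg.aemeasurable aestronglyMeasurable_id
    rw [h2] at h5
    conv_lhs => rw [h5]
    exact integral_neg _
  rw [h1]
  linarith [h3]

lemma aux_mul_integrable [IsProbabilityMeasure P] {f g : Ω → ℝ}
    (hf : MemLp f 2 P) (hg : MemLp g 2 P) :
    Integrable (fun ω => f ω * g ω) P := by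
  refine Integrable.mono'
    ((hf.integrable_sq.add hg.integrable_sq).const_mul (1/2)) (hf.1.mul hg.1) ?_
  filter_upwards with ω
  rw [Real.norm_eq_abs, abs_mul]
  simp only [Pi.add_apply]
  nlinarith [sq_nonneg (|f ω| - |g ω|), sq_abs (f ω), sq_abs (g ω),
    abs_nonneg (f ω), abs_nonneg (g ω)]

lemma aux_cauchy_schwarz {f g : Ω → ℝ} (hf : MemLp f 2 P) (hg : MemLp g 2 P) :
    ∫ ω, |f ω * g ω| ∂P ≤
      Real.sqrt (∫ ω, f ω ^ 2 ∂P) * Real.sqrt (∫ ω, g ω ^ 2 ∂P) := by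
  have h2 : (2 : ENNReal) = ENNReal.ofReal (2:ℝ) := by norm_num
  rw [h2] at hf hg
  have hpq : Real.HolderConjugate 2 2 := Real.holderConjugate_iff.2 ⟨one_lt_two, by norm_num⟩
  have h := MeasureTheory.integral_mul_norm_le_Lp_mul_Lq hpq hf hg
  have e1 : ∫ ω, |f ω * g ω| ∂P = ∫ ω, ‖f ω‖ * ‖g ω‖ ∂P := by
    congr 1; funext ω; rw [abs_mul, Real.norm_eq_abs, Real.norm_eq_abs]
  have e2 : ∫ ω, ‖f ω‖ ^ (2:ℝ) ∂P = ∫ ω, f ω ^ 2 ∂P := by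
    congr 1; funext ω; rw [Real.rpow_two, Real.norm_eq_abs, sq_abs]
  have e3 : ∫ ω, ‖g ω‖ ^ (2:ℝ) ∂P = ∫ ω, g ω ^ 2 ∂P := by
    congr 1; funext ω; rw [Real.rpow_two, Real.norm_eq_abs, sq_abs]
  rw [e2, e3] at h
  rw [e1, Real.sqrt_eq_rpow, Real.sqrt_eq_rpow]
  exact h

lemma exists_good_version {W : ℝ → Ω → ℝ} (hmeas : ∀ t, Measurable (W t))
    (hcont : ∀ᵐ ω ∂P, ContinuousOn (fun t => W t ω) (Ici 0)) :
    ∃ V : ℝ → Ω → ℝ, StronglyMeasurable (Function.uncurry V) ∧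
      ∀ᵐ ω ∂P, ∀ s, 0 ≤ s → V s ω = W s ω := by
  classical
  set N := toMeasurable P {ω | ¬ ContinuousOn (fun t => W t ω) (Ici 0)} with hN
  have hNmeas : MeasurableSet N := measurableSet_toMeasurable _ _
  have hNnull : P N = 0 := by
    rw [hN, measure_toMeasurable]
    rw [Filter.eventually_iff, mem_ae_iff] at hcont
    exact hcont
  refine ⟨fun s ω => if ω ∈ N then 0 else W (max s 0) ω, ?_, ?_⟩
  · apply stronglyMeasurable_uncurry_of_continuous_of_stronglyMeasurable
    · intro ω
      by_cases hω : ω ∈ N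
      · simp only [if_pos hω]; exact continuous_const
      · simp only [if_neg hω]
        have hc : ContinuousOn (fun t => W t ω) (Ici 0) := by
          by_contra hcon; exact hω (subset_toMeasurable _ _ hcon)
        exact hc.comp_continuous (continuous_id.max continuous_const)
          (fun x => mem_Ici.2 (le_max_right _ _))
    · intro s
      exact (Measurable.ite hNmeas measurable_const (hmeas _)).stronglyMeasurable
  · filter_upwards [measure_eq_zero_iff_ae_notMem.mp hNnull] with ω hω s hs
    simp [if_neg hω, max_eq_left hs]

end prob

section main

variable {Ω : Type*} [MeasurableSpace Ω] {P : Measure Ω} {W : ℝ → Ω → ℝ}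

lemma bm_setup (hW : IsStandardBrownianMotion P W) :
    ∃ V : ℝ → Ω → ℝ, StronglyMeasurable (Function.uncurry V) ∧
      (∀ᵐ ω ∂P, ∀ s, 0 ≤ s → V s ω = W s ω) ∧
      (∀ s : ℝ, 0 < s → MemLp (V s) 2 P) ∧
      (∀ s w : ℝ, 0 < s → 0 < w → ∫ ω, V s ω * V w ω ∂P = min s w) ∧
      (∀ s : ℝ, 0 < s → ∫ ω, V s ω ^ 2 ∂P = s) ∧
      (∀ s : ℝ, 0 < s → ∫ ω, V s ω ∂P = 0) := by
  obtain ⟨hP, hmeas, hcont, hzero, hgauss, hcov⟩ := hW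
  obtain ⟨V, hVsm, hVae⟩ := exists_good_version hmeas hcont
  have hVaeS : ∀ s : ℝ, 0 ≤ s → (fun ω => V s ω) =ᵐ[P] W s := fun s hs => by
    filter_upwards [hVae] with ω h using h s hs
  have hcross : ∀ s w : ℝ, 0 < s → 0 < w → ∫ ω, V s ω * V w ω ∂P = min s w := by
    intro s w hs hw
    have he : (fun ω => V s ω * V w ω) =ᵐ[P] (fun ω => W s ω * W w ω) := by
      filter_upwards [hVaeS s hs.le, hVaeS w hw.le] with ω h1 h2
      rw [h1, h2]
    rw [integral_congr_ae he]
    exact hcov s (mem_Ici.2 hs.le) w (mem_Ici.2 hw.le)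
  have hsq : ∀ s : ℝ, 0 < s → ∫ ω, V s ω ^ 2 ∂P = s := by
    intro s hs
    have h1 := hcross s s hs hs
    rw [min_self] at h1
    simp only [pow_two]
    exact h1
  have hL2 : ∀ s : ℝ, 0 < s → MemLp (V s) 2 P := by
    intro s hs
    have hi : Integrable (fun ω => V s ω ^ 2) P := by
      by_contra hi
      have := hsq s hs
      rw [integral_undef hi] at this
      exact hs.ne this
    exact (memLp_two_iff_integrable_sq hVsm.of_uncurry_left.aestronglyMeasurable).2 hi
  have hmean0 : ∀ s : ℝ, 0 < s → ∫ ω, V s ω ∂P = 0 := by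
    intro s hs
    obtain ⟨v, hv⟩ := hgauss 1 (fun _ => 1) (fun _ => s) (fun _ => hs.le)
    have hv' : Measure.map (W s) P = gaussianReal 0 v := by simpa using hv
    have h0 : ∫ ω, W s ω ∂P = 0 := aux_gaussian_mean_zero (hmeas s) hv'
    rw [integral_congr_ae (hVaeS s hs.le), h0]
  exact ⟨V, hVsm, hVae, hL2, hcross, hsq, hmean0⟩

lemma sqrt_alg {s : ℝ} (hs : 0 < s) : s⁻¹ * Real.sqrt s = (Real.sqrt s)⁻¹ := by
  have h1 : Real.sqrt s * Real.sqrt s = s := Real.mul_self_sqrt hs.le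
  have h2 : Real.sqrt s ≠ 0 := (Real.sqrt_pos.2 hs).ne'
  nth_rewrite 1 [← h1]
  rw [mul_inv, mul_assoc, inv_mul_cancel₀ h2, mul_one]

lemma bm_mean_zero (hW : IsStandardBrownianMotion P W) {t : ℝ} (ht : 0 < t) :
    ∫ ω, (∫ s in Ioc (0:ℝ) t, s⁻¹ * W s ω) ∂P = 0 := by
  have hP : IsProbabilityMeasure P := hW.1
  obtain ⟨V, hVsm, hVae, hL2, hcross, hsq, hmean0⟩ := bm_setup hW
  have hFm : Measurable (fun q : ℝ × Ω => q.1⁻¹ * V q.1 q.2) :=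
    measurable_fst.inv.mul hVsm.measurable
  have hFint : Integrable (fun q : ℝ × Ω => q.1⁻¹ * V q.1 q.2)
      ((volume.restrict (Ioc (0:ℝ) t)).prod P) := by
    refine (integrable_prod_iff hFm.aestronglyMeasurable).2 ⟨?_, ?_⟩
    · filter_upwards [ae_restrict_mem measurableSet_Ioc] with s hs
      exact ((hL2 s hs.1).integrable one_le_two).const_mul _
    · refine Integrable.mono' (integrableOn_sqrt_inv ht)
        hFm.aestronglyMeasurable.norm.integral_prod_right' ?_
      filter_upwards [ae_restrict_mem measurableSet_Ioc] with s hs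
      have hs0 : (0:ℝ) < s := hs.1
      have key : ∫ ω, ‖s⁻¹ * V s ω‖ ∂P ≤ (Real.sqrt s)⁻¹ := by
        have step1 : ∫ ω, ‖s⁻¹ * V s ω‖ ∂P = s⁻¹ * ∫ ω, |V s ω * 1| ∂P := by
          rw [← integral_const_mul]
          congr 1; funext ω
          rw [Real.norm_eq_abs, abs_mul, abs_of_pos (inv_pos.2 hs0), mul_one]
        rw [step1]
        have step2 := aux_cauchy_schwarz (P := P) (hL2 s hs0) (memLp_const (1:ℝ))
        have step3 : (s⁻¹ : ℝ) * ∫ ω, |V s ω * 1| ∂P ≤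
            s⁻¹ * (Real.sqrt (∫ ω, V s ω ^ 2 ∂P) * Real.sqrt (∫ ω, (1:ℝ) ^ 2 ∂P)) :=
          mul_le_mul_of_nonneg_left step2 (inv_pos.2 hs0).le
        refine step3.trans (le_of_eq ?_)
        rw [hsq s hs0]
        have h1 : ∫ ω, (1:ℝ) ^ 2 ∂P = 1 := by simp
        rw [h1, Real.sqrt_one, mul_one, sqrt_alg hs0]
      have hnn : 0 ≤ ∫ ω, ‖s⁻¹ * V s ω‖ ∂P := integral_nonneg fun ω => norm_nonneg _
      rw [Real.norm_of_nonneg hnn]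
      exact key
  have hae : ∀ᵐ ω ∂P, (∫ s in Ioc (0:ℝ) t, s⁻¹ * W s ω) = ∫ s in Ioc (0:ℝ) t, s⁻¹ * V s ω := by
    filter_upwards [hVae] with ω h
    exact setIntegral_congr_fun measurableSet_Ioc (fun s hs => by rw [h s hs.1.le])
  rw [integral_congr_ae hae]
  have hswap := integral_integral_swap (f := fun (ω : Ω) (s : ℝ) => s⁻¹ * V s ω)
    (μ := P) (ν := volume.restrict (Ioc (0:ℝ) t)) hFint.swap
  rw [hswap]
  have hz : ∀ᵐ s ∂(volume.restrict (Ioc (0:ℝ) t)), (∫ ω, s⁻¹ * V s ω ∂P) = 0 := by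
    filter_upwards [ae_restrict_mem measurableSet_Ioc] with s hs
    rw [integral_const_mul, hmean0 s hs.1, mul_zero]
  rw [integral_congr_ae hz, integral_zero]

lemma bm_cov (hW : IsStandardBrownianMotion P W) {t₁ t₂ : ℝ} (ht₁ : 0 < t₁) (h12 : t₁ ≤ t₂) :
    ∫ ω, (∫ s in Ioc (0:ℝ) t₁, s⁻¹ * W s ω) * (∫ s in Ioc (0:ℝ) t₂, s⁻¹ * W s ω) ∂P
      = t₁ * (2 + Real.log t₂ - Real.log t₁) := by
  have ht₂ : 0 < t₂ := lt_of_lt_of_le ht₁ h12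
  have hP : IsProbabilityMeasure P := hW.1
  obtain ⟨V, hVsm, hVae, hL2, hcross, hsq, hmean0⟩ := bm_setup hW
  have hFm : Measurable (fun q : ℝ × Ω => q.1⁻¹ * V q.1 q.2) :=
    measurable_fst.inv.mul hVsm.measurable
  have hGm : Measurable (fun z : (ℝ × ℝ) × Ω =>
      (z.1.1⁻¹ * V z.1.1 z.2) * (z.1.2⁻¹ * V z.1.2 z.2)) :=
    (hFm.comp (measurable_fst.fst.prodMk measurable_snd)).mul
      (hFm.comp (measurable_fst.snd.prodMk measurable_snd))
  have hmem : ∀ᵐ p ∂((volume.restrict (Ioc (0:ℝ) t₁)).prod (volume.restrict (Ioc (0:ℝ) t₂))),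
      p ∈ Ioc (0:ℝ) t₁ ×ˢ Ioc (0:ℝ) t₂ := by
    rw [Measure.prod_restrict]
    exact ae_restrict_mem (measurableSet_Ioc.prod measurableSet_Ioc)
  have hnorm : ∀ p : ℝ × ℝ, p ∈ Ioc (0:ℝ) t₁ ×ˢ Ioc (0:ℝ) t₂ →
      ∫ ω, ‖(p.1⁻¹ * V p.1 ω) * (p.2⁻¹ * V p.2 ω)‖ ∂P
        ≤ (Real.sqrt p.1)⁻¹ * (Real.sqrt p.2)⁻¹ := by
    intro p hp
    have h1 : (0:ℝ) < p.1 := hp.1.1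
    have h2 : (0:ℝ) < p.2 := hp.2.1
    have step1 : ∫ ω, ‖(p.1⁻¹ * V p.1 ω) * (p.2⁻¹ * V p.2 ω)‖ ∂P
        = (p.1⁻¹ * p.2⁻¹) * ∫ ω, |V p.1 ω * V p.2 ω| ∂P := by
      rw [← integral_const_mul]
      congr 1; funext ω
      rw [Real.norm_eq_abs, abs_mul, abs_mul, abs_mul, abs_mul,
        abs_of_pos (inv_pos.2 h1), abs_of_pos (inv_pos.2 h2)]
      ring
    rw [step1]
    have hCS := aux_cauchy_schwarz (P := P) (hL2 p.1 h1) (hL2 p.2 h2)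
    rw [hsq p.1 h1, hsq p.2 h2] at hCS
    calc (p.1⁻¹ * p.2⁻¹) * ∫ ω, |V p.1 ω * V p.2 ω| ∂P
        ≤ (p.1⁻¹ * p.2⁻¹) * (Real.sqrt p.1 * Real.sqrt p.2) :=
          mul_le_mul_of_nonneg_left hCS (by positivity)
      _ = (Real.sqrt p.1)⁻¹ * (Real.sqrt p.2)⁻¹ := by
          rw [show p.1⁻¹ * p.2⁻¹ * (Real.sqrt p.1 * Real.sqrt p.2)
              = (p.1⁻¹ * Real.sqrt p.1) * (p.2⁻¹ * Real.sqrt p.2) by ring,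
            sqrt_alg h1, sqrt_alg h2]
  have hGint : Integrable (fun z : (ℝ × ℝ) × Ω =>
      (z.1.1⁻¹ * V z.1.1 z.2) * (z.1.2⁻¹ * V z.1.2 z.2))
      (((volume.restrict (Ioc (0:ℝ) t₁)).prod (volume.restrict (Ioc (0:ℝ) t₂))).prod P) := by
    refine (integrable_prod_iff hGm.aestronglyMeasurable).2 ⟨?_, ?_⟩
    · filter_upwards [hmem] with p hp
      have hi : Integrable (fun ω => (p.1⁻¹ * p.2⁻¹) * (V p.1 ω * V p.2 ω)) P :=
        (aux_mul_integrable (hL2 p.1 hp.1.1) (hL2 p.2 hp.2.1)).const_mul _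
      exact hi.congr (ae_of_all _ fun ω => by ring)
    · refine Integrable.mono'
        (Integrable.mul_prod (integrableOn_sqrt_inv ht₁) (integrableOn_sqrt_inv ht₂))
        hGm.aestronglyMeasurable.norm.integral_prod_right' ?_
      filter_upwards [hmem] with p hp
      rw [Real.norm_of_nonneg (integral_nonneg fun ω => norm_nonneg _)]
      exact hnorm p hp
  have hinner : ∀ᵐ p ∂((volume.restrict (Ioc (0:ℝ) t₁)).prod (volume.restrict (Ioc (0:ℝ) t₂))),
      (∫ ω, (p.1⁻¹ * V p.1 ω) * (p.2⁻¹ * V p.2 ω) ∂P)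
        = p.1⁻¹ * p.2⁻¹ * min p.1 p.2 := by
    filter_upwards [hmem] with p hp
    have e : (fun ω => (p.1⁻¹ * V p.1 ω) * (p.2⁻¹ * V p.2 ω))
        = fun ω => (p.1⁻¹ * p.2⁻¹) * (V p.1 ω * V p.2 ω) := by funext ω; ring
    rw [e, integral_const_mul, hcross p.1 p.2 hp.1.1 hp.2.1]
  have hae : ∀ᵐ ω ∂P,
      (∫ s in Ioc (0:ℝ) t₁, s⁻¹ * W s ω) * (∫ s in Ioc (0:ℝ) t₂, s⁻¹ * W s ω)
      = ∫ p, (p.1⁻¹ * V p.1 ω) * (p.2⁻¹ * V p.2 ω)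
          ∂((volume.restrict (Ioc (0:ℝ) t₁)).prod (volume.restrict (Ioc (0:ℝ) t₂))) := by
    filter_upwards [hVae] with ω h
    have e1 : ∫ s in Ioc (0:ℝ) t₁, s⁻¹ * W s ω = ∫ s in Ioc (0:ℝ) t₁, s⁻¹ * V s ω :=
      setIntegral_congr_fun measurableSet_Ioc (fun s hs => by rw [h s hs.1.le])
    have e2 : ∫ s in Ioc (0:ℝ) t₂, s⁻¹ * W s ω = ∫ s in Ioc (0:ℝ) t₂, s⁻¹ * V s ω :=
      setIntegral_congr_fun measurableSet_Ioc (fun s hs => by rw [h s hs.1.le])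
    rw [e1, e2]
    exact (integral_prod_mul (μ := volume.restrict (Ioc (0:ℝ) t₁))
      (ν := volume.restrict (Ioc (0:ℝ) t₂))
      (fun s => s⁻¹ * V s ω) (fun w => w⁻¹ * V w ω)).symm
  have hφint : Integrable (fun p : ℝ × ℝ => p.1⁻¹ * p.2⁻¹ * min p.1 p.2)
      ((volume.restrict (Ioc (0:ℝ) t₁)).prod (volume.restrict (Ioc (0:ℝ) t₂))) :=
    hGint.integral_prod_left.congr hinner
  have hinner2 : ∀ s ∈ Ioc (0:ℝ) t₁,
      ∫ w in Ioc (0:ℝ) t₂, s⁻¹ * w⁻¹ * min s w = 1 + (Real.log t₂ - Real.log s) := by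
    intro s hs
    have hs0 : (0:ℝ) < s := hs.1
    have hst2 : s ≤ t₂ := hs.2.trans h12
    have hsplit : Ioc (0:ℝ) t₂ = Ioc 0 s ∪ Ioc s t₂ := (Ioc_union_Ioc_eq_Ioc hs0.le hst2).symm
    have hEq1 : EqOn (fun w : ℝ => s⁻¹ * w⁻¹ * min s w) (fun _ => s⁻¹) (Ioc 0 s) := by
      intro w hw
      simp only
      rw [min_eq_right hw.2, mul_assoc, inv_mul_cancel₀ (ne_of_gt hw.1), mul_one]
    have hEq2 : EqOn (fun w : ℝ => s⁻¹ * w⁻¹ * min s w) (fun w => w⁻¹) (Ioc s t₂) := by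
      intro w hw
      simp only
      rw [min_eq_left hw.1.le, mul_comm s⁻¹ w⁻¹, mul_assoc, inv_mul_cancel₀ hs0.ne', mul_one]
    have hint1 : IntegrableOn (fun w : ℝ => s⁻¹ * w⁻¹ * min s w) (Ioc 0 s) volume :=
      (integrableOn_const measure_Ioc_lt_top.ne).congr_fun
        (fun w hw => (hEq1 hw).symm) measurableSet_Ioc
    have hint2 : IntegrableOn (fun w : ℝ => s⁻¹ * w⁻¹ * min s w) (Ioc s t₂) volume := by
      have hi : IntervalIntegrable (fun w : ℝ => w⁻¹) volume s t₂ := by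
        refine intervalIntegral.intervalIntegrable_inv (f := fun x => x) (fun x hx => ?_)
          continuousOn_id
        rw [uIcc_of_le hst2] at hx
        exact ne_of_gt (lt_of_lt_of_le hs0 hx.1)
      exact ((intervalIntegrable_iff_integrableOn_Ioc_of_le hst2).1 hi).congr_fun
        (fun w hw => (hEq2 hw).symm) measurableSet_Ioc
    have hval1 : ∫ w in Ioc (0:ℝ) s, s⁻¹ * w⁻¹ * min s w = 1 := by
      rw [setIntegral_congr_fun measurableSet_Ioc hEq1, setIntegral_const, measureReal_def, Real.volume_Ioc,
        smul_eq_mul, sub_zero, ENNReal.toReal_ofReal hs0.le]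
      exact mul_inv_cancel₀ hs0.ne'
    have hval2 : ∫ w in Ioc s t₂, s⁻¹ * w⁻¹ * min s w = Real.log t₂ - Real.log s := by
      rw [setIntegral_congr_fun measurableSet_Ioc hEq2,
        ← intervalIntegral.integral_of_le hst2,
        _root_.integral_inv (notMem_uIcc_of_lt hs0 (lt_of_lt_of_le hs0 hst2)),
        Real.log_div ht₂.ne' hs0.ne']
    rw [hsplit, setIntegral_union (Ioc_disjoint_Ioc_of_le le_rfl) measurableSet_Ioc hint1 hint2,
      hval1, hval2]
  have houter : ∫ s in Ioc (0:ℝ) t₁, (1 + (Real.log t₂ - Real.log s))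
      = t₁ * (2 + Real.log t₂ - Real.log t₁) := by
    have e : EqOn (fun s : ℝ => 1 + (Real.log t₂ - Real.log s))
        (fun s : ℝ => (fun _ => 1 + Real.log t₂) s - Real.log s) (Ioc 0 t₁) := by
      intro s _; simp only; ring
    rw [setIntegral_congr_fun measurableSet_Ioc e,
      integral_sub (integrableOn_const (μ := volume) (s := Ioc 0 t₁) (C := 1 + Real.log t₂) measure_Ioc_lt_top.ne) (integrableOn_log_Ioc ht₁),
      setIntegral_const, integral_log_Ioc ht₁, measureReal_def, Real.volume_Ioc, sub_zero,
      ENNReal.toReal_ofReal ht₁.le, smul_eq_mul]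
    ring
  refine (integral_congr_ae hae).trans ?_
  refine (integral_integral_swap
    (f := fun (ω : Ω) (p : ℝ × ℝ) => (p.1⁻¹ * V p.1 ω) * (p.2⁻¹ * V p.2 ω)) hGint.swap).trans ?_
  refine (integral_congr_ae hinner).trans ?_
  refine (integral_prod _ hφint).trans ?_
  refine (setIntegral_congr_fun measurableSet_Ioc ?_).trans houter
  intro s hs
  simp only
  exact hinner2 s hs


end main

/-- covariance of the limiting CVaR process (case `γ = 0`)
`B̃(t) = (1/t)∫₀ᵗ s^(−1) W(s) ds`:
`Cov(B̃(t₁), B̃(t₂)) = (max t₁ t₂)^(−1)(2 − log(min t₁ t₂) + log(max t₁ t₂))`;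
in particular `Var(B̃(t)) = 2/t`. -/
theorem limiting_cvar_process_covariance_gamma_zero {Ω : Type*} [MeasurableSpace Ω]
    (P : Measure Ω) (W : ℝ → Ω → ℝ) (hW : IsStandardBrownianMotion P W)
    (t₁ t₂ : ℝ) (ht₁ : 0 < t₁) (ht₂ : 0 < t₂)
    (B : ℝ → Ω → ℝ)
    (hB : ∀ t ω, B t ω = (1 / t) * ∫ s in Ioc (0 : ℝ) t, s⁻¹ * W s ω) :
    ((∫ ω, B t₁ ω * B t₂ ω ∂P) - (∫ ω, B t₁ ω ∂P) * ∫ ω, B t₂ ω ∂P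
        = (max t₁ t₂)⁻¹ * (2 - Real.log (min t₁ t₂) + Real.log (max t₁ t₂))) ∧
      ∀ t > (0 : ℝ),
        (∫ ω, B t ω * B t ω ∂P) - (∫ ω, B t ω ∂P) * ∫ ω, B t ω ∂P = 2 / t := by
  have hmean : ∀ t, 0 < t → ∫ ω, B t ω ∂P = 0 := by
    intro t ht
    calc ∫ ω, B t ω ∂P
        = ∫ ω, ((1/t) * ∫ s in Ioc (0:ℝ) t, s⁻¹ * W s ω) ∂P :=
          integral_congr_ae (Filter.Eventually.of_forall fun ω => hB t ω)
      _ = (1/t) * ∫ ω, (∫ s in Ioc (0:ℝ) t, s⁻¹ * W s ω) ∂P := integral_const_mul _ _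
      _ = 0 := by rw [bm_mean_zero hW ht, mul_zero]
  have hcovgen : ∀ a b : ℝ, 0 < a → a ≤ b →
      ∫ ω, B a ω * B b ω ∂P = b⁻¹ * (2 - Real.log a + Real.log b) := by
    intro a b ha hab
    have hb : 0 < b := lt_of_lt_of_le ha hab
    calc ∫ ω, B a ω * B b ω ∂P
        = ∫ ω, ((1/a) * (1/b)) *
            ((∫ s in Ioc (0:ℝ) a, s⁻¹ * W s ω) * (∫ s in Ioc (0:ℝ) b, s⁻¹ * W s ω)) ∂P := by
          refine integral_congr_ae (Filter.Eventually.of_forall fun ω => ?_)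
          show B a ω * B b ω = _
          rw [hB a ω, hB b ω]; ring
      _ = ((1/a) * (1/b)) * ∫ ω,
            (∫ s in Ioc (0:ℝ) a, s⁻¹ * W s ω) * (∫ s in Ioc (0:ℝ) b, s⁻¹ * W s ω) ∂P :=
          integral_const_mul _ _
      _ = ((1/a) * (1/b)) * (a * (2 + Real.log b - Real.log a)) := by rw [bm_cov hW ha hab]
      _ = b⁻¹ * (2 - Real.log a + Real.log b) := by
          field_simp
          ring
  constructor
  · rw [hmean t₁ ht₁, hmean t₂ ht₂, zero_mul, sub_zero]
    rcases le_total t₁ t₂ with h | h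
    · rw [max_eq_right h, min_eq_left h]
      exact hcovgen t₁ t₂ ht₁ h
    · rw [max_eq_left h, min_eq_right h]
      rw [integral_congr_ae (Filter.Eventually.of_forall fun ω => mul_comm (B t₁ ω) (B t₂ ω))]
      exact hcovgen t₂ t₁ ht₂ h
  · intro t ht
    rw [hmean t ht, zero_mul, sub_zero, hcovgen t t ht le_rfl]
    ring
end
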